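/- Let μ be the bracket on ℝ⁶ given by μ(e₁,e₂) = e₅ and μ(e₃,e₄) = e₆ (the direct sum of two Heisenberg algebras). Then: (i) a symmetric 6×6 real matrix D is a derivation of μ if and only if there exist real a,b,c,d,α,β with D = diag([[a,α],[α,b]], [[c,β],[β,d]], a+b, c+d) in block form; (ii) the linear map H with He₁ = e₄, He₂ = e₃, He₃ = e₂, He₄ = e₁, He₅ = −e₆, He₆ = −e₅ is an orthogonal automorphism of μ and satisfies H·diag(a,b,c,d,a+b,c+d)·H⁻¹ = diag(d,c,b,a,c+d,a+b) for all a,b,c,d ∈ ℝ. -/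

import Mathlib

open Matrix

/-- The bracket on ℝ⁶ given by μ(e₁,e₂) = e₅, μ(e₃,e₄) = e₆ (bilinear extension);
this is the nilsoliton μ₃₀ = (0,0,0,0,12,34), the sum of two Heisenberg algebras. -/
def mu30 (x y : Fin 6 → ℝ) : Fin 6 → ℝ :=
  ![0, 0, 0, 0, x 0 * y 1 - x 1 * y 0, x 2 * y 3 - x 3 * y 2]

/-- `D` is a derivation of the bracket `mu30`. -/
def IsDerivMu30 (D : Matrix (Fin 6) (Fin 6) ℝ) : Prop :=
  ∀ x y : Fin 6 → ℝ, D.mulVec (mu30 x y) = mu30 (D.mulVec x) y + mu30 x (D.mulVec y)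

/-- `g` is an automorphism of the bracket `mu30`. -/
def IsAutoMu30 (g : Matrix (Fin 6) (Fin 6) ℝ) : Prop :=
  IsUnit g ∧ ∀ x y : Fin 6 → ℝ, g.mulVec (mu30 x y) = mu30 (g.mulVec x) (g.mulVec y)

/-- The map H with He₁ = e₄, He₂ = e₃, He₃ = e₂, He₄ = e₁, He₅ = −e₆, He₆ = −e₅. -/
def H30 : Matrix (Fin 6) (Fin 6) ℝ :=
  !![0, 0, 0, 1, 0, 0;
     0, 0, 1, 0, 0, 0;
     0, 1, 0, 0, 0, 0;
     1, 0, 0, 0, 0, 0;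
     0, 0, 0, 0, 0, -1;
     0, 0, 0, 0, -1, 0]

/-! Evaluating the derivation identity on (e₁,e₂) and (e₃,e₄) fixes the columns of e₅ and e₆ as
(d₁₁ + d₂₂) e₅ and (d₃₃ + d₄₄) e₆, and on the mixed pairs (eᵢ,eⱼ), i ≤ 2 < j ≤ 4, whose bracket
vanishes, it kills the off-diagonal 2×2 blocks; for symmetric D the last two rows then vanish too.
H acts as the signed permutation x ↦ (x₄, x₃, x₂, x₁, -x₆, -x₅), which is a symmetric involution,
so H is orthogonal with H⁻¹ = H, and conjugation by H permutes diagonal entries by (14)(23)(56). -/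

namespace IsDerivMu30

variable {D : Matrix (Fin 6) (Fin 6) ℝ}

theorem eq_blocks (hD : IsDerivMu30 D) :
    D = !![D 0 0, D 0 1, 0, 0, 0, 0;
           D 1 0, D 1 1, 0, 0, 0, 0;
           0, 0, D 2 2, D 2 3, 0, 0;
           0, 0, D 3 2, D 3 3, 0, 0;
           D 4 0, D 4 1, D 4 2, D 4 3, D 0 0 + D 1 1, 0;
           D 5 0, D 5 1, D 5 2, D 5 3, 0, D 2 2 + D 3 3] := by
  have col_four := hD (Pi.single 0 1) (Pi.single 1 1)
  have col_five := hD (Pi.single 2 1) (Pi.single 3 1)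
  have mixed₀₂ := hD (Pi.single 0 1) (Pi.single 2 1)
  have mixed₀₃ := hD (Pi.single 0 1) (Pi.single 3 1)
  have mixed₁₂ := hD (Pi.single 1 1) (Pi.single 2 1)
  have mixed₁₃ := hD (Pi.single 1 1) (Pi.single 3 1)
  simp [mu30, mulVec, dotProduct, Fin.sum_univ_succ, funext_iff,
    Fin.forall_fin_succ] at col_four col_five mixed₀₂ mixed₀₃ mixed₁₂ mixed₁₃
  ext i j
  fin_cases i <;> fin_cases j <;> simp <;> linarith

theorem eq_symmetric_blocks (hD : IsDerivMu30 D) (hs : D.IsSymm) :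
    D = !![D 0 0, D 0 1, 0, 0, 0, 0;
           D 0 1, D 1 1, 0, 0, 0, 0;
           0, 0, D 2 2, D 2 3, 0, 0;
           0, 0, D 2 3, D 3 3, 0, 0;
           0, 0, 0, 0, D 0 0 + D 1 1, 0;
           0, 0, 0, 0, 0, D 2 2 + D 3 3] := by
  ext i j
  have hij := congr_fun₂ hD.eq_blocks i j
  have hji := congr_fun₂ hD.eq_blocks j i
  rw [hs.apply i j] at hji
  fin_cases i <;> fin_cases j <;> simp at hij hji ⊢ <;> linarith

end IsDerivMu30

theorem isDerivMu30_of_blocks (a b c d α β : ℝ) :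
    IsDerivMu30 !![a, α, 0, 0, 0, 0;
                   α, b, 0, 0, 0, 0;
                   0, 0, c, β, 0, 0;
                   0, 0, β, d, 0, 0;
                   0, 0, 0, 0, a + b, 0;
                   0, 0, 0, 0, 0, c + d] := by
  intro x y
  ext k
  fin_cases k <;> simp [mu30, mulVec, dotProduct, Fin.sum_univ_succ] <;> ring

theorem H30_mulVec (x : Fin 6 → ℝ) : H30 *ᵥ x = ![x 3, x 2, x 1, x 0, -x 5, -x 4] := by
  ext i
  fin_cases i <;> simp [H30, mulVec, dotProduct, Fin.sum_univ_succ]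

theorem H30_transpose : H30ᵀ = H30 := by
  ext i j
  fin_cases i <;> fin_cases j <;> rfl

theorem H30_mul_self : H30 * H30 = 1 := by
  rw [ext_iff_mulVec]
  intro x
  rw [← mulVec_mulVec, H30_mulVec, H30_mulVec, one_mulVec]
  ext i
  fin_cases i <;> simp

theorem H30_mulVec_mu30 (x y : Fin 6 → ℝ) :
    H30 *ᵥ mu30 x y = mu30 (H30 *ᵥ x) (H30 *ᵥ y) := by
  simp only [H30_mulVec, mu30]
  ext i
  fin_cases i <;> simp

theorem H30_mul_diagonal (v : Fin 6 → ℝ) :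
    H30 * diagonal v = diagonal ![v 3, v 2, v 1, v 0, v 5, v 4] * H30 := by
  rw [ext_iff_mulVec]
  intro x
  rw [← mulVec_mulVec, ← mulVec_mulVec, H30_mulVec, H30_mulVec]
  ext i
  fin_cases i <;> simp [mulVec_diagonal]

theorem stmt16 :
    (∀ D : Matrix (Fin 6) (Fin 6) ℝ, D.IsSymm →
      (IsDerivMu30 D ↔ ∃ a b c d α β : ℝ,
        D = !![a, α, 0, 0, 0, 0;
               α, b, 0, 0, 0, 0;
               0, 0, c, β, 0, 0;
               0, 0, β, d, 0, 0;
               0, 0, 0, 0, a + b, 0;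
               0, 0, 0, 0, 0, c + d])) ∧
    H30 * H30ᵀ = 1 ∧ IsAutoMu30 H30 ∧
    (∀ a b c d : ℝ,
      H30 * Matrix.diagonal ![a, b, c, d, a + b, c + d] * H30⁻¹ =
        Matrix.diagonal ![d, c, b, a, c + d, a + b]) := by
  refine ⟨fun D hs => ⟨fun hD => ⟨_, _, _, _, _, _, hD.eq_symmetric_blocks hs⟩, ?_⟩,
    by rw [H30_transpose, H30_mul_self],
    ⟨IsUnit.of_mul_eq_one _ H30_mul_self, H30_mulVec_mu30⟩, fun a b c d => ?_⟩
  · rintro ⟨a, b, c, d, α, β, rfl⟩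
    exact isDerivMu30_of_blocks a b c d α β
  · rw [inv_eq_left_inv H30_mul_self, H30_mul_diagonal, mul_assoc, H30_mul_self, mul_one]
    rfl
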